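/- Let A be a commutative complex Banach algebra with identity 1, let a ∈ A, and let b be a recurrent vector for M_a, witnessed by a strictly increasing sequence (n_k) of positive integers with a^{n_k} b → b in A. If the zero set Z(b̂) = {φ ∈ X : φ(b) = 0} has empty interior in the maximal ideal space X, then |φ(a)| = 1 for every φ ∈ X; in particular a is invertible in A. -/

import Mathlib

open Filter Topology

/-! Applying a character `φ` to `a ^ n k * b → b` gives `φ(a) ^ n k → 1` wherever `φ(b) ≠ 0`,
and a power sequence along `n k → ∞` can only tend to `1` if `|φ(a)| = 1`. The complement of
`Z(b̂)` is dense and `φ ↦ |φ(a)|` is continuous, so `|φ(a)| = 1` on all of the character space;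
a non-invertible `a` would be killed by some character. -/

theorem eq_one_of_tendsto_pow_comp {r : ℝ} (hr : 0 ≤ r) {n : ℕ → ℕ}
    (hn : Tendsto n atTop atTop) (h : Tendsto (fun k => r ^ n k) atTop (𝓝 1)) : r = 1 := by
  rcases lt_trichotomy r 1 with hlt | heq | hgt
  · have h0 := (tendsto_pow_atTop_nhds_zero_of_lt_one hr hlt).comp hn
    exact absurd (tendsto_nhds_unique h h0) one_ne_zero
  · exact heq
  · exact absurd h (not_tendsto_nhds_of_tendsto_atTop
      ((tendsto_pow_atTop_atTop_of_one_lt hgt).comp hn) 1)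

theorem norm_eq_one_of_tendsto_pow_comp {𝕜 : Type*} [NormedDivisionRing 𝕜] {z : 𝕜}
    {n : ℕ → ℕ} (hn : Tendsto n atTop atTop) (h : Tendsto (fun k => z ^ n k) atTop (𝓝 1)) :
    ‖z‖ = 1 := by
  refine eq_one_of_tendsto_pow_comp (norm_nonneg z) hn ?_
  simpa only [norm_pow, norm_one] using h.norm

theorem tendsto_pow_comp_nhds_one_of_tendsto_pow_comp_mul {𝕜 : Type*} [NormedField 𝕜]
    {z w : 𝕜} (hw : w ≠ 0) {n : ℕ → ℕ} (h : Tendsto (fun k => z ^ n k * w) atTop (𝓝 w)) :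
    Tendsto (fun k => z ^ n k) atTop (𝓝 1) := by
  simpa only [mul_div_cancel_right₀ _ hw, div_self hw] using h.div_const w

section CharacterSpace

variable {A : Type*} [NormedCommRing A] [NormedAlgebra ℂ A]

theorem WeakDual.CharacterSpace.norm_apply_eq_one_of_tendsto_pow_mul {a b : A} {n : ℕ → ℕ}
    (hn : Tendsto n atTop atTop) (hb : Tendsto (fun k => a ^ n k * b) atTop (𝓝 b))
    (φ : WeakDual.characterSpace ℂ A) (hφ : φ b ≠ 0) : ‖φ a‖ = 1 := by
  have hφb : Tendsto (fun k => φ a ^ n k * φ b) atTop (𝓝 (φ b)) := by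
    simpa only [Function.comp_def, map_mul, map_pow] using ((map_continuous φ).tendsto b).comp hb
  exact norm_eq_one_of_tendsto_pow_comp hn
    (tendsto_pow_comp_nhds_one_of_tendsto_pow_comp_mul hφ hφb)

theorem WeakDual.CharacterSpace.continuous_norm_apply (a : A) :
    Continuous fun φ : WeakDual.characterSpace ℂ A => ‖φ a‖ :=
  ((WeakDual.eval_continuous a).comp continuous_subtype_val).norm

theorem WeakDual.CharacterSpace.isUnit_of_forall_apply_ne_zero [CompleteSpace A] {a : A}
    (h : ∀ φ : WeakDual.characterSpace ℂ A, φ a ≠ 0) : IsUnit a := by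
  by_contra ha
  obtain ⟨φ, hφ⟩ := WeakDual.CharacterSpace.exists_apply_eq_zero ha
  exact h φ hφ

end CharacterSpace

theorem gelfand_unimodular_of_recurrent_vector_general
    (A : Type*) [NormedCommRing A] [NormedAlgebra ℂ A] [CompleteSpace A]
    (a b : A) (n : ℕ → ℕ) (hmono : StrictMono n)
    (hb : Tendsto (fun k => a ^ n k * b) atTop (𝓝 b))
    (hZ : interior {φ : WeakDual.characterSpace ℂ A | φ b = 0} = ∅) :
    (∀ φ : WeakDual.characterSpace ℂ A, ‖φ a‖ = 1) ∧ IsUnit a := by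
  have hdense : Dense {φ : WeakDual.characterSpace ℂ A | φ b = 0}ᶜ :=
    interior_eq_empty_iff_dense_compl.mp hZ
  have habs : (fun φ : WeakDual.characterSpace ℂ A => ‖φ a‖) = fun _ => 1 :=
    (WeakDual.CharacterSpace.continuous_norm_apply a).ext_on hdense continuous_const
      fun φ hφ => WeakDual.CharacterSpace.norm_apply_eq_one_of_tendsto_pow_mul
        hmono.tendsto_atTop hb φ hφ
  have hunimodular (φ : WeakDual.characterSpace ℂ A) : ‖φ a‖ = 1 := congrFun habs φ
  refine ⟨hunimodular, WeakDual.CharacterSpace.isUnit_of_forall_apply_ne_zero fun φ hφ => ?_⟩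
  simpa [hφ] using hunimodular φ

/-- If `b` is a recurrent vector for the multiplication operator `M_a`
on a commutative complex Banach algebra `A` and the zero set of the Gelfand transform of
`b` has empty interior in the character space of `A`, then `|φ(a)| = 1` for every
character `φ`; in particular `a` is invertible in `A`. -/
theorem gelfand_unimodular_of_recurrent_vector
    (A : Type*) [NormedCommRing A] [NormedAlgebra ℂ A] [CompleteSpace A]
    (a b : A) (n : ℕ → ℕ) (hmono : StrictMono n) (hpos : ∀ k, 0 < n k)
    (hb : Tendsto (fun k => a ^ n k * b) atTop (𝓝 b))
    (hZ : interior {φ : WeakDual.characterSpace ℂ A | φ b = 0} = ∅) :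
    (∀ φ : WeakDual.characterSpace ℂ A, ‖φ a‖ = 1) ∧ IsUnit a :=
  gelfand_unimodular_of_recurrent_vector_general A a b n hmono hb hZ
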